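/- arXiv:1806.09953 — 2 statements merged into one kernel-verified Lean document; each statement's English description precedes it below -/
import Mathlib

section
/- Let k ≥ 7 be odd and let G be a graph containing no odd cycle of length less than k. For every good sequence D = (z_0,…,z_{k−1}) in G and every ℓ with 0 ≤ ℓ ≤ k−1, the sum of the weights of all good sequences in G whose first ℓ+1 entries are z_0,…,z_ℓ is at most ∏_{i=0}^{ℓ} |A_i(D)|^{−1}. -/
/-- `f` realizes a cycle of length `ℓ` in `G`: an injective map from `ZMod ℓ` whose
consecutive images are adjacent. -/
def IsCycleMap {V : Type*} (G : SimpleGraph V) {ℓ : ℕ} (f : ZMod ℓ → V) : Prop :=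
  Function.Injective f ∧ ∀ i, G.Adj (f i) (f (i + 1))

/-- `G` contains no odd cycle of length less than `k`. -/
def NoShortOddCycle {V : Type*} (G : SimpleGraph V) (k : ℕ) : Prop :=
  ∀ ℓ : ℕ, Odd ℓ → 3 ≤ ℓ → ℓ < k → ∀ f : ZMod ℓ → V, ¬ IsCycleMap G f

/-- The good sequence associated to the cycle `f = (v_0, v_1, …, v_{k-1})`:
the entries `v_2` and `v_3` are swapped. -/
def goodOfCycle {V : Type*} {k : ℕ} (f : ZMod k → V) : ZMod k → V :=
  fun i => if i = 2 then f 3 else if i = 3 then f 2 else f i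

/-- `z` is a good sequence in `G`: it arises from some `k`-cycle of `G`
(quantifying over all cycle maps accounts for all `2k` rotations and reflections). -/
def IsGoodSeq {V : Type*} (G : SimpleGraph V) {k : ℕ} (z : ZMod k → V) : Prop :=
  ∃ f : ZMod k → V, IsCycleMap G f ∧ z = goodOfCycle f

/-- The vertex sequence `z₀, z₁, z₃, z₂, z₄, …, z_{i-1}, w` (indices `0, …, i`,
with the final entry `w` at index `i`). -/
def seqAt {V : Type*} {k : ℕ} (z : ZMod k → V) (w : V) (i : ℕ) : ℕ → V :=
  fun a => if a = i then w else if a = 2 then z 3 else if a = 3 then z 2 else z (a : ZMod k)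

/-- `q 0, q 1, …, q i` is an induced path in `G`. -/
def IsInducedPathOn {V : Type*} (G : SimpleGraph V) (q : ℕ → V) (i : ℕ) : Prop :=
  (∀ a b, a ≤ i → b ≤ i → q a = q b → a = b) ∧
  (∀ a b, a ≤ i → b ≤ i → (G.Adj (q a) (q b) ↔ (b = a + 1 ∨ a = b + 1)))

/-- `q 0, q 1, …, q (k-1)` is an induced cycle in `G`. -/
def IsInducedCycleOn {V : Type*} (G : SimpleGraph V) (q : ℕ → V) (k : ℕ) : Prop :=
  (∀ a b, a < k → b < k → q a = q b → a = b) ∧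
  (∀ a b, a < k → b < k →
    (G.Adj (q a) (q b) ↔
      ((b = a + 1 ∨ a = b + 1) ∨ (a = 0 ∧ b = k - 1) ∨ (b = 0 ∧ a = k - 1))))

/-- The set `A_i(D)` for the good sequence `D = z` (of a graph `G` without odd cycles of
length less than `k`). -/
def Aset {V : Type*} (G : SimpleGraph V) (k : ℕ) (z : ZMod k → V) (i : ℕ) : Set V :=
  if i = 0 then Set.univ
  else if i = 1 then G.neighborSet (z 0)
  else if i = 2 then {w | w ∉ G.neighborSet (z 0) ∧ G.dist (z 1) w = 2}
  else if i = 3 then G.neighborSet (z 1) ∩ G.neighborSet (z 2)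
  else if i = k - 1 then {w | IsInducedCycleOn G (seqAt z w (k - 1)) k}
  else {w | IsInducedPathOn G (seqAt z w i) i}

/-- The weight `w(D) = ∏_{i=0}^{k-1} |A_i(D)|⁻¹` of a good sequence `D = z`. -/
noncomputable def weight {V : Type*} (G : SimpleGraph V) (k : ℕ) (z : ZMod k → V) : ℝ :=
  ∏ i ∈ Finset.range k, ((Nat.card ↥(Aset G k z i) : ℝ))⁻¹

/-- The good sequence `D_j = (v_j, v_{j+1}, v_{j+3}, v_{j+2}, v_{j+4}, …, v_{j+k-1})`
associated to the cycle `f = (v_0, …, v_{k-1})` (indices mod `k`). -/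
def goodRot {V : Type*} {k : ℕ} (f : ZMod k → V) (j : ZMod k) : ZMod k → V :=
  goodOfCycle (fun i => f (j + i))


section Aux

variable {V : Type*} {k : ℕ}

lemma castinj (a b : ℕ) (ha : a < k) (hb : b < k) (h : (a : ZMod k) = (b : ZMod k)) :
    a = b := by
  have := congrArg ZMod.val h
  rwa [ZMod.val_cast_of_lt ha, ZMod.val_cast_of_lt hb] at this

lemma castne {a b : ℕ} (ha : a < k) (hb : b < k) (h : a ≠ b) :
    (a : ZMod k) ≠ (b : ZMod k) := fun e => h (castinj a b ha hb e)

lemma no_even_chord {G : SimpleGraph V} (hG : NoShortOddCycle G k) (hk : 7 ≤ k)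
    {f : ZMod k → V} (hf : IsCycleMap G f) (a b : ZMod k)
    (hadj : G.Adj (f a) (f b)) (h2 : 2 ≤ (b - a).val) (hk2 : (b - a).val ≤ k - 2)
    (he : Even (b - a).val) : False := by
  haveI : NeZero k := ⟨by omega⟩
  set d := (b - a).val with hd
  set L := d + 1 with hL
  haveI : NeZero L := ⟨by omega⟩
  haveI : Fact (1 < L) := ⟨by omega⟩
  have hLk : L < k := by omega
  refine hG L (Even.add_one he) (by omega) hLk
    (fun i => f (a + ((i.val : ℕ) : ZMod k))) ⟨?_, ?_⟩
  · intro i j hij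
    have h1 : a + ((i.val : ℕ) : ZMod k) = a + ((j.val : ℕ) : ZMod k) := hf.1 hij
    have h2' : ((i.val : ℕ) : ZMod k) = ((j.val : ℕ) : ZMod k) := by
      exact add_left_cancel h1
    have : i.val = j.val :=
      castinj _ _ (lt_of_lt_of_le i.val_lt (le_of_lt hLk)) (lt_of_lt_of_le j.val_lt (le_of_lt hLk)) h2'
    have := congrArg (fun t : ℕ => (t : ZMod L)) this
    simpa [ZMod.natCast_zmod_val] using this
  · intro i
    have hv : i.val < L := i.val_lt
    have hv1 : (i + 1).val = (i.val + 1) % L := by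
      rw [ZMod.val_add, ZMod.val_one]
    show G.Adj (f (a + ((i.val : ℕ) : ZMod k))) (f (a + (((i+1).val : ℕ) : ZMod k)))
    rcases lt_or_eq_of_le (Nat.succ_le_of_lt hv) with hlt | heq
    · have hs : (i + 1).val = i.val + 1 := by rw [hv1, Nat.mod_eq_of_lt hlt]
      rw [hs]
      have key : (((i.val + 1 : ℕ)) : ZMod k) = ((i.val : ℕ) : ZMod k) + 1 := by
        push_cast; ring
      rw [key, ← add_assoc]
      exact hf.2 (a + ((i.val : ℕ) : ZMod k))
    · have h0 : (i + 1).val = 0 := by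
        rw [hv1, show i.val + 1 = L from heq, Nat.mod_self]
      rw [h0]
      have hiv : i.val = d := by omega
      have hb' : a + ((i.val : ℕ) : ZMod k) = b := by
        rw [hiv, hd, ZMod.natCast_zmod_val]
        ring
      rw [hb', Nat.cast_zero, add_zero]
      exact hadj.symm

lemma cycle_adj_iff {G : SimpleGraph V} (hG : NoShortOddCycle G k) (hodd : Odd k)
    (hk : 7 ≤ k) {f : ZMod k → V} (hf : IsCycleMap G f) (a b : ZMod k) :
    G.Adj (f a) (f b) ↔ (b = a + 1 ∨ a = b + 1) := by
  haveI : NeZero k := ⟨by omega⟩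
  constructor
  · intro h
    by_contra hc
    push_neg at hc
    obtain ⟨h1, h2⟩ := hc
    have hab : a ≠ b := fun e => h.ne (congrArg f e)
    set d := (b - a).val with hd
    have hdlt : d < k := (b - a).val_lt
    have hval : ((d : ℕ) : ZMod k) = b - a := ZMod.natCast_zmod_val _
    have hd0 : d ≠ 0 := by
      intro e
      rw [e] at hval
      push_cast at hval
      have : b = a := by linear_combination -hval
      exact hab this.symm
    have hd1 : d ≠ 1 := by
      intro e
      rw [e] at hval
      apply h1
      push_cast at hval
      linear_combination -hval
    have hdk : d ≠ k - 1 := by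
      intro e
      apply h2
      have hcast : ((d : ℕ) : ZMod k) + 1 = 0 := by
        rw [e]
        have h9 : ((k - 1 : ℕ) : ZMod k) + 1 = ((k - 1 + 1 : ℕ) : ZMod k) := by
          push_cast; ring
        rw [h9, show k - 1 + 1 = k by omega, ZMod.natCast_self]
      rw [hval] at hcast
      linear_combination -hcast
    rcases Nat.even_or_odd d with he | ho
    · exact no_even_chord hG hk hf a b h (by omega) (by omega) he
    · have hba : (a - b) = -(b - a) := by ring
      have hne : b - a ≠ 0 := fun e => hd0 (by rw [hd, e, ZMod.val_zero])
      have hev : (a - b).val = k - d := by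
        rw [hba, ZMod.neg_val, if_neg hne]
      refine no_even_chord hG hk hf b a h.symm ?_ ?_ ?_
      · rw [hev]; omega
      · rw [hev]; omega
      · rw [hev]
        exact Nat.Odd.sub_odd hodd ho
  · rintro (rfl | rfl)
    · exact hf.2 a
    · exact (hf.2 b).symm

end Aux

section Aux2

variable {V : Type*} {k : ℕ}

lemma good_eval (hk : 7 ≤ k) (f : ZMod k → V) {a : ℕ} (ha : a < k) (h2 : a ≠ 2)
    (h3 : a ≠ 3) : goodOfCycle f (a : ZMod k) = f (a : ZMod k) := by
  unfold goodOfCycle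
  rw [if_neg, if_neg]
  · intro e
    refine h3 (castinj a 3 ha (by omega) ?_)
    rw [e]; push_cast; ring
  · intro e
    refine h2 (castinj a 2 ha (by omega) ?_)
    rw [e]; push_cast; ring

lemma good_eval2 (f : ZMod k → V) : goodOfCycle f 2 = f 3 := by
  unfold goodOfCycle; rw [if_pos rfl]

lemma good_eval3 (hk : 7 ≤ k) (f : ZMod k → V) : goodOfCycle f 3 = f 2 := by
  unfold goodOfCycle
  rw [if_neg, if_pos rfl]
  intro e
  have : (3 : ℕ) = (2 : ℕ) := by
    refine castinj (k := k) 3 2 (by omega) (by omega) ?_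
    push_cast; exact e
  omega

lemma nat2 : ((2 : ℕ) : ZMod k) = (2 : ZMod k) := by push_cast; ring
lemma nat3 : ((3 : ℕ) : ZMod k) = (3 : ZMod k) := by push_cast; ring

/-- For a good sequence coming from cycle map `f`, the seq `z₀z₁z₃z₂z₄…` is just `f`. -/
lemma seqAt_good_eval (hk : 7 ≤ k) (f : ZMod k → V) {i : ℕ} (hi4 : 4 ≤ i)
    (hik : i ≤ k - 1) {a : ℕ} (ha : a ≤ i) :
    seqAt (goodOfCycle f) (goodOfCycle f (i : ZMod k)) i a = f (a : ZMod k) := by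
  unfold seqAt
  by_cases h1 : a = i
  · rw [if_pos h1, h1]
    exact good_eval hk f (by omega) (by omega) (by omega)
  rw [if_neg h1]
  by_cases h2 : a = 2
  · rw [if_pos h2, good_eval3 hk, h2, nat2]
  rw [if_neg h2]
  by_cases h3 : a = 3
  · rw [if_pos h3, good_eval2, h3, nat3]
  rw [if_neg h3]
  exact good_eval hk f (by omega) h2 h3

lemma mem_Aset_self {G : SimpleGraph V} (hG : NoShortOddCycle G k) (hodd : Odd k)
    (hk : 7 ≤ k) {y : ZMod k → V} (hy : IsGoodSeq G y) {i : ℕ}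
    (hi1 : 1 ≤ i) (hik : i ≤ k - 1) : y ((i : ℕ) : ZMod k) ∈ Aset G k y i := by
  obtain ⟨f, hf, rfl⟩ := hy
  have hadj := cycle_adj_iff hG hodd hk hf
  have hinj := hf.1
  have e0 : goodOfCycle f 0 = f 0 := by
    have := good_eval hk f (a := 0) (by omega) (by omega) (by omega)
    simpa using this
  have e1 : goodOfCycle f 1 = f 1 := by
    have := good_eval hk f (a := 1) (by omega) (by omega) (by omega)
    simpa using this
  rcases eq_or_lt_of_le hi1 with h1 | hi2
  · -- i = 1
    subst h1
    unfold Aset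
    rw [if_neg (by omega), if_pos rfl]
    simp only [Nat.cast_one, SimpleGraph.mem_neighborSet, e0, e1]
    simpa using hf.2 0
  rcases eq_or_lt_of_le (show 2 ≤ i by omega) with h2 | hi3
  · -- i = 2
    subst h2
    unfold Aset
    rw [if_neg (by omega), if_neg (by omega), if_pos rfl]
    rw [nat2, good_eval2]
    constructor
    · -- f 3 not adjacent to f 0
      intro hmem
      rw [SimpleGraph.mem_neighborSet, e0] at hmem
      rcases (hadj 0 3).1 hmem with h | h
      · have : (3 : ℕ) = (1 : ℕ) := by
          refine castinj (k := k) 3 1 (by omega) (by omega) ?_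
          push_cast; simpa using h
        omega
      · have : (0 : ℕ) = (4 : ℕ) := by
          refine castinj (k := k) 0 4 (by omega) (by omega) ?_
          push_cast; linear_combination h
        omega
    · -- dist (f 1) (f 3) = 2
      rw [e1]
      have ha12 : G.Adj (f 1) (f 2) := by simpa [one_add_one_eq_two] using hf.2 1
      have ha23 : G.Adj (f 2) (f 3) := by
        have := hf.2 2
        have h23 : (2 : ZMod k) + 1 = 3 := by ring
        rwa [h23] at this
      have hw : G.Walk (f 1) (f 3) := SimpleGraph.Walk.cons ha12 ha23.toWalk
      have hle : G.dist (f 1) (f 3) ≤ 2 := by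
        have := SimpleGraph.dist_le (SimpleGraph.Walk.cons ha12 ha23.toWalk)
        simpa using this
      have hne13 : f 1 ≠ f 3 := fun e => by
        have : (1 : ℕ) = (3 : ℕ) := by
          refine castinj (k := k) 1 3 (by omega) (by omega) ?_
          push_cast
          exact hinj e
        omega
      have h0 : G.dist (f 1) (f 3) ≠ 0 := fun h =>
        hne13 ((SimpleGraph.Reachable.dist_eq_zero_iff ⟨hw⟩).mp h)
      have hd1 : G.dist (f 1) (f 3) ≠ 1 := by
        intro h
        have hA := SimpleGraph.dist_eq_one_iff_adj.mp h
        rcases (hadj 1 3).1 hA with h | h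
        · have : (3 : ℕ) = (2 : ℕ) := by
            refine castinj (k := k) 3 2 (by omega) (by omega) ?_
            push_cast; simpa [one_add_one_eq_two] using h
          omega
        · have : (1 : ℕ) = (4 : ℕ) := by
            refine castinj (k := k) 1 4 (by omega) (by omega) ?_
            push_cast; linear_combination h
          omega
      omega
  rcases eq_or_lt_of_le (show 3 ≤ i by omega) with h3 | hi4
  · -- i = 3
    subst h3
    unfold Aset
    rw [if_neg (by omega), if_neg (by omega), if_neg (by omega), if_pos rfl]
    rw [nat3, good_eval3 hk]
    constructor
    · rw [SimpleGraph.mem_neighborSet, e1]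
      simpa [one_add_one_eq_two] using hf.2 1
    · rw [SimpleGraph.mem_neighborSet, good_eval2]
      have := hf.2 2
      have h23 : (2 : ZMod k) + 1 = 3 := by ring
      rw [h23] at this
      exact this.symm
  -- now 4 ≤ i
  have hseq : ∀ a : ℕ, a ≤ i →
      seqAt (goodOfCycle f) (goodOfCycle f (i : ZMod k)) i a = f (a : ZMod k) :=
    fun a ha => seqAt_good_eval hk f (by omega) hik ha
  by_cases hklast : i = k - 1
  · -- induced cycle case
    subst hklast
    unfold Aset
    rw [if_neg (by omega), if_neg (by omega), if_neg (by omega), if_neg (by omega),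
      if_pos rfl]
    constructor
    · intro a b ha hb he
      rw [hseq a (by omega), hseq b (by omega)] at he
      exact castinj a b (by omega) (by omega) (hinj he)
    · intro a b ha hb
      rw [hseq a (by omega), hseq b (by omega), hadj]
      have key : ∀ c e : ℕ, c < k → e < k →
          (((e : ℕ) : ZMod k) = ((c : ℕ) : ZMod k) + 1 ↔ (e = c + 1 ∨ (c = k - 1 ∧ e = 0))) := by
        intro c e hc he
        constructor
        · intro h
          have h' : ((e : ℕ) : ZMod k) = ((c + 1 : ℕ) : ZMod k) := by push_cast; exact h
          rcases lt_or_eq_of_le (Nat.succ_le_of_lt hc) with hlt | heq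
          · exact Or.inl (castinj e (c+1) he hlt h')
          · right
            have hz : ((c + 1 : ℕ) : ZMod k) = (((0 : ℕ)) : ZMod k) := by
              rw [show c + 1 = k from heq, ZMod.natCast_self, Nat.cast_zero]
            refine ⟨by omega, castinj e 0 he (by omega) (h'.trans hz)⟩
        · rintro (rfl | ⟨hc1, he0⟩)
          · push_cast; ring
          · subst he0
            have : ((c + 1 : ℕ) : ZMod k) = 0 := by
              rw [show c + 1 = k by omega, ZMod.natCast_self]
            push_cast at this ⊢
            linear_combination -this
      rw [key a b (by omega) (by omega), key b a (by omega) (by omega)]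
      constructor
      · rintro (h | h) <;> omega
      · intro h; omega
  · -- induced path case
    unfold Aset
    rw [if_neg (by omega), if_neg (by omega), if_neg (by omega), if_neg (by omega),
      if_neg hklast]
    constructor
    · intro a b ha hb he
      rw [hseq a ha, hseq b hb] at he
      exact castinj a b (by omega) (by omega) (hinj he)
    · intro a b ha hb
      rw [hseq a ha, hseq b hb, hadj]
      constructor
      · rintro (h | h)
        · left
          refine castinj (k := k) b (a + 1) (by omega) (by omega) ?_
          push_cast; exact h
        · right
          refine castinj (k := k) a (b + 1) (by omega) (by omega) ?_
          push_cast; exact h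
      · rintro (rfl | rfl)
        · left; push_cast; ring
        · right; push_cast; ring

end Aux2

section Aux3

variable {V : Type*} {k : ℕ}

lemma seqAt_congr {y z : ZMod k → V} {i : ℕ} (hi : 4 ≤ i) (w : V)
    (h : ∀ a : ℕ, a < i → y (a : ZMod k) = z (a : ZMod k)) :
    ∀ a : ℕ, a ≤ i → seqAt y w i a = seqAt z w i a := by
  intro a ha
  unfold seqAt
  by_cases h1 : a = i
  · rw [if_pos h1, if_pos h1]
  rw [if_neg h1, if_neg h1]
  by_cases h2 : a = 2
  · rw [if_pos h2, if_pos h2]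
    have := h 3 (by omega); rwa [nat3] at this
  rw [if_neg h2, if_neg h2]
  by_cases h3 : a = 3
  · rw [if_pos h3, if_pos h3]
    have := h 2 (by omega); rwa [nat2] at this
  rw [if_neg h3, if_neg h3]
  exact h a (by omega)

lemma pathOn_congr {G : SimpleGraph V} {q q' : ℕ → V} {i : ℕ}
    (h : ∀ a, a ≤ i → q a = q' a) (hp : IsInducedPathOn G q i) :
    IsInducedPathOn G q' i := by
  refine ⟨fun a b ha hb he => hp.1 a b ha hb ?_, fun a b ha hb => ?_⟩
  · rw [h a ha, h b hb]; exact he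
  · rw [← h a ha, ← h b hb]; exact hp.2 a b ha hb

lemma cycleOn_congr {G : SimpleGraph V} {q q' : ℕ → V} {n : ℕ}
    (h : ∀ a, a < n → q a = q' a) (hp : IsInducedCycleOn G q n) :
    IsInducedCycleOn G q' n := by
  refine ⟨fun a b ha hb he => hp.1 a b ha hb ?_, fun a b ha hb => ?_⟩
  · rw [h a ha, h b hb]; exact he
  · rw [← h a ha, ← h b hb]; exact hp.2 a b ha hb

lemma Aset_congr (G : SimpleGraph V) (hk : 7 ≤ k) {y z : ZMod k → V} {i : ℕ}
    (h : ∀ a : ℕ, a < i → y (a : ZMod k) = z (a : ZMod k)) :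
    Aset G k y i = Aset G k z i := by
  have h' : ∀ a : ℕ, a < i → z (a : ZMod k) = y (a : ZMod k) := fun a ha => (h a ha).symm
  unfold Aset
  by_cases h0 : i = 0
  · rw [if_pos h0, if_pos h0]
  rw [if_neg h0, if_neg h0]
  by_cases h1 : i = 1
  · subst h1
    have e0 := h 0 (by omega); rw [Nat.cast_zero] at e0
    rw [if_pos rfl, if_pos rfl, e0]
  rw [if_neg h1, if_neg h1]
  by_cases h2i : i = 2
  · subst h2i
    have e0 := h 0 (by omega); rw [Nat.cast_zero] at e0
    have e1 := h 1 (by omega); rw [Nat.cast_one] at e1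
    rw [if_pos rfl, if_pos rfl, e0, e1]
  rw [if_neg h2i, if_neg h2i]
  by_cases h3i : i = 3
  · subst h3i
    have e1 := h 1 (by omega); rw [Nat.cast_one] at e1
    have e2 := h 2 (by omega); rw [nat2] at e2
    rw [if_pos rfl, if_pos rfl, e1, e2]
  rw [if_neg h3i, if_neg h3i]
  have hi4 : 4 ≤ i := by omega
  by_cases hkl : i = k - 1
  · rw [if_pos hkl, if_pos hkl]
    ext w
    simp only [Set.mem_setOf_eq]
    constructor
    · intro hp
      refine cycleOn_congr (fun a ha => ?_) hp
      rw [← hkl]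
      exact seqAt_congr hi4 w h a (by omega)
    · intro hp
      refine cycleOn_congr (fun a ha => ?_) hp
      rw [← hkl]
      exact seqAt_congr hi4 w h' a (by omega)
  · rw [if_neg hkl, if_neg hkl]
    ext w
    simp only [Set.mem_setOf_eq]
    constructor
    · exact fun hp => pathOn_congr (fun a ha => seqAt_congr hi4 w h a ha) hp
    · exact fun hp => pathOn_congr (fun a ha => seqAt_congr hi4 w h' a ha) hp

lemma main_bound {V : Type*} [Fintype V] {k : ℕ} (hodd : Odd k) (hk : 7 ≤ k)
    (G : SimpleGraph V) (hG : NoShortOddCycle G k) :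
    ∀ d m : ℕ, m + d = k - 1 → ∀ z : ZMod k → V, IsGoodSeq G z →
      ∑ᶠ y ∈ {y : ZMod k → V |
          IsGoodSeq G y ∧ ∀ i : ℕ, i ≤ m → y (i : ZMod k) = z (i : ZMod k)},
        weight G k y ≤
      ∏ i ∈ Finset.range (m + 1), ((Nat.card ↥(Aset G k z i) : ℝ))⁻¹ := by
  haveI : NeZero k := ⟨by omega⟩
  intro d
  induction d with
  | zero =>
    intro m hm z hz
    have hset : {y : ZMod k → V |
        IsGoodSeq G y ∧ ∀ i : ℕ, i ≤ m → y (i : ZMod k) = z (i : ZMod k)} = {z} := by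
      ext y
      simp only [Set.mem_setOf_eq, Set.mem_singleton_iff]
      constructor
      · rintro ⟨hy, hagree⟩
        funext x
        have hx : x = ((x.val : ℕ) : ZMod k) := (ZMod.natCast_zmod_val x).symm
        rw [hx]
        exact hagree x.val (by have := x.val_lt; omega)
      · rintro rfl
        exact ⟨hz, fun _ _ => rfl⟩
    rw [hset, finsum_mem_singleton]
    have hmk : m + 1 = k := by omega
    rw [hmk]
    unfold weight
    exact le_rfl
  | succ d ih =>
    intro m hm z hz
    classical
    have hm1 : m + 1 ≤ k - 1 := by omega
    set S := {y : ZMod k → V |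
        IsGoodSeq G y ∧ ∀ i : ℕ, i ≤ m → y (i : ZMod k) = z (i : ZMod k)} with hS
    have hfin : S.Finite := Set.toFinite _
    rw [← hfin.coe_toFinset, finsum_mem_coe_finset]
    rw [← Finset.sum_fiberwise hfin.toFinset (fun y => y (((m + 1 : ℕ)) : ZMod k))
      (weight G k)]
    set B := ∏ i ∈ Finset.range (m + 1), ((Nat.card ↥(Aset G k z i) : ℝ))⁻¹ with hB
    have hBnn : 0 ≤ B := Finset.prod_nonneg fun i _ => inv_nonneg.2 (Nat.cast_nonneg _)
    set c := ((Nat.card ↥(Aset G k z (m + 1)) : ℝ)) with hc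
    have hcnn : (0 : ℝ) ≤ c := Nat.cast_nonneg _
    have key : ∀ w : V,
        (∑ y ∈ hfin.toFinset.filter (fun y => y (((m + 1 : ℕ)) : ZMod k) = w), weight G k y)
          ≤ (if w ∈ Aset G k z (m + 1) then B * c⁻¹ else 0) := by
      intro w
      rcases Finset.eq_empty_or_nonempty
          (hfin.toFinset.filter (fun y => y (((m + 1 : ℕ)) : ZMod k) = w)) with
        hemp | ⟨y₀, hy₀⟩
      · rw [hemp, Finset.sum_empty]
        by_cases hw : w ∈ Aset G k z (m + 1)
        · rw [if_pos hw]
          exact mul_nonneg hBnn (inv_nonneg.2 hcnn)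
        · rw [if_neg hw]
      · have hy₀' := Finset.mem_filter.mp hy₀
        have hy₀S : y₀ ∈ S := hfin.mem_toFinset.mp hy₀'.1
        obtain ⟨hy₀good, hy₀agree⟩ := hy₀S
        have hAeq : Aset G k y₀ (m + 1) = Aset G k z (m + 1) :=
          Aset_congr G hk (fun a ha => hy₀agree a (by omega))
        have hwmem : w ∈ Aset G k z (m + 1) := by
          rw [← hAeq, ← hy₀'.2]
          exact mem_Aset_self hG hodd hk hy₀good (by omega) hm1
        rw [if_pos hwmem]
        have hfin2 : ({y : ZMod k → V |
            IsGoodSeq G y ∧ ∀ i : ℕ, i ≤ m + 1 → y (i : ZMod k) = y₀ (i : ZMod k)}).Finite :=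
          Set.toFinite _
        have hfeq : hfin.toFinset.filter (fun y => y (((m + 1 : ℕ)) : ZMod k) = w) =
            hfin2.toFinset := by
          ext y
          simp only [Finset.mem_filter, Set.Finite.mem_toFinset, hS, Set.mem_setOf_eq]
          constructor
          · rintro ⟨⟨hygood, hyagree⟩, hyw⟩
            refine ⟨hygood, fun i hi => ?_⟩
            rcases Nat.lt_or_ge i (m + 1) with hlt | hge
            · rw [hyagree i (by omega), ← hy₀agree i (by omega)]
            · have hieq : i = m + 1 := by omega
              subst hieq
              rw [hyw, hy₀'.2]
          · rintro ⟨hygood, hyagree⟩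
            refine ⟨⟨hygood, fun i hi => ?_⟩, ?_⟩
            · rw [hyagree i (by omega), hy₀agree i hi]
            · rw [hyagree (m + 1) le_rfl, hy₀'.2]
        rw [hfeq, ← finsum_mem_coe_finset, hfin2.coe_toFinset]
        have hih := ih (m + 1) (by omega) y₀ hy₀good
        refine le_trans hih ?_
        rw [Finset.prod_range_succ]
        have hprod : ∏ i ∈ Finset.range (m + 1), ((Nat.card ↥(Aset G k y₀ i) : ℝ))⁻¹ = B := by
          rw [hB]
          refine Finset.prod_congr rfl fun i hi => ?_
          have hilt := Finset.mem_range.mp hi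
          rw [Aset_congr G hk (fun a ha => hy₀agree a (by omega))]
        rw [hprod, hAeq]
    calc ∑ w : V, ∑ y ∈ hfin.toFinset.filter (fun y => y (((m + 1 : ℕ)) : ZMod k) = w),
          weight G k y
        ≤ ∑ w : V, (if w ∈ Aset G k z (m + 1) then B * c⁻¹ else 0) :=
          Finset.sum_le_sum (fun w _ => key w)
      _ ≤ B := by
          rw [← Finset.sum_filter, Finset.sum_const, nsmul_eq_mul]
          have hcard : (((Finset.univ.filter
              (fun w => w ∈ Aset G k z (m + 1))).card : ℕ) : ℝ) = c := by
            rw [hc]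
            congr 1
            have h1 : Nat.card ↥(Aset G k z (m + 1)) =
                (Set.toFinite (Aset G k z (m + 1))).toFinset.card := by
              rw [Nat.card_coe_set_eq, Set.ncard_eq_toFinset_card _ (Set.toFinite _)]
            have h2 : (Set.toFinite (Aset G k z (m + 1))).toFinset =
                Finset.univ.filter (fun w => w ∈ Aset G k z (m + 1)) := by
              ext w
              simp only [Set.Finite.mem_toFinset, Finset.mem_filter, Finset.mem_univ,
                true_and]
            rw [h1, h2]
          rw [hcard]
          rcases eq_or_ne c 0 with h | h
          · rw [h]
            simpa using hBnn
          · have hcc : c * (B * c⁻¹) = B := by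
              field_simp
            rw [hcc]

end Aux3

/-- For every good sequence `D = z` and every `ℓ ≤ k - 1`, the sum of the weights of all
good sequences whose first `ℓ + 1` entries are `z 0, …, z ℓ` is at most
`∏_{i=0}^{ℓ} |A_i(D)|⁻¹`. -/
theorem sum_of_weights_with_fixed_prefix {V : Type*} [Fintype V] (k : ℕ) (hodd : Odd k)
    (hk : 7 ≤ k) (G : SimpleGraph V) (hG : NoShortOddCycle G k)
    (z : ZMod k → V) (hz : IsGoodSeq G z) (ℓ : ℕ) (hℓ : ℓ ≤ k - 1) :
    ∑ᶠ y ∈ {y : ZMod k → V | IsGoodSeq G y ∧ ∀ i : ℕ, i ≤ ℓ → y (i : ZMod k) = z (i : ZMod k)},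
        weight G k y ≤
      ∏ i ∈ Finset.range (ℓ + 1), ((Nat.card ↥(Aset G k z i) : ℝ))⁻¹ := by
  exact main_bound hodd hk G hG (k - 1 - ℓ) ℓ (by omega) z hz
end

section
/- Let k ≥ 7 be odd, let G be a graph on n vertices containing no odd cycle of length less than k, and fix a k-cycle v_0v_1…v_{k−1} in G with vertex set C, good sequences D_j (0 ≤ j ≤ k−1), and n_{i,j} = |A_i(D_j)|. Then ∑_{j=0}^{k−1} ( n_{1,j}/2 + ∑_{i=2}^{k−1} n_{i,j} ) = n(k−1) holds if and only if every vertex of G is adjacent to exactly two vertices of C which are at distance two along the cycle C. -/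
/-!
Double counting turns the left-hand side into `∑ w, c(w)`, where
`c(w) = |J₁(w)|/2 + ∑_{i=2}^{k-1} |Jᵢ(w)|` and `Jᵢ(w) = {j | w ∈ Aᵢ(D_j)}`.

Since `G` has no odd cycle shorter than `k`, a walk of length `r < k` between cycle vertices
`v_x`, `v_y` forces `y - x ≡ ±d (mod k)` for some `d ≤ r` with `d ≡ r (mod 2)`. Hence every
vertex either has exactly the two neighbours `v_{a-1}`, `v_{a+1}` on `C`, or at most one. In
the first case `J₁(w) = {a-1, a+1}` and every other `Jᵢ(w)` is a singleton, so `c(w) = k - 1`.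
In the second case `|J₁(w)| ≤ 1`, `|J₂(w)| ≤ 3` (the positions at distance two from `w` are
pairwise joined by walks of length four), `J₃(w) = J_{k-1}(w) = ∅` and the remaining `Jᵢ(w)`
have at most one element, so `c(w) ≤ k - 3/2`. So the sum is at most `n(k-1)`, with equality
exactly when every vertex is of the first kind.
-/

open Finset SimpleGraph

namespace ZMod

variable {k m : ℕ}

theorem natCast_inj_of_lt {a b : ℕ} (ha : a < k) (hb : b < k) :
    (a : ZMod k) = b ↔ a = b := by
  rw [natCast_eq_natCast_iff', Nat.mod_eq_of_lt ha, Nat.mod_eq_of_lt hb]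

theorem natCast_ne_zero_of_lt (h0 : m ≠ 0) (h : m < k) : (m : ZMod k) ≠ 0 := by
  rw [Ne, natCast_eq_zero_iff]
  exact Nat.not_dvd_of_pos_of_lt (Nat.pos_of_ne_zero h0) h

theorem ofNat_ne_zero_of_lt (m : ℕ) [m.AtLeastTwo] (h : m < k) :
    (OfNat.ofNat m : ZMod k) ≠ 0 := by
  exact_mod_cast natCast_ne_zero_of_lt (Nat.pos_of_neZero m).ne' h

theorem natCast_ne_zero_of_even (hk : Odd k) (he : Even m) (h0 : m ≠ 0) (h : m < 2 * k) :
    (m : ZMod k) ≠ 0 := by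
  rw [Ne, natCast_eq_zero_iff]
  intro hkm
  have := Nat.le_of_dvd (Nat.pos_of_ne_zero h0)
    ((Nat.coprime_two_left.mpr hk).mul_dvd_of_dvd_of_dvd (even_iff_two_dvd.mp he) hkm)
  omega

theorem card_le_three_of_forall_eq_add_even (hk : Odd k) (h7 : 7 ≤ k) {B : Finset (ZMod k)}
    (hB : ∀ b ∈ B, ∀ c ∈ B, c = b ∨ c = b + 2 ∨ b = c + 2 ∨ c = b + 4 ∨ b = c + 4) :
    #B ≤ 3 := by
  obtain rfl | ⟨b, hb⟩ := B.eq_empty_or_nonempty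
  · simp
  have h2 := ofNat_ne_zero_of_lt (k := k) 2 (by omega)
  have h4 := ofNat_ne_zero_of_lt (k := k) 4 (by omega)
  have h6 := ofNat_ne_zero_of_lt (k := k) 6 (by omega)
  have h8 : (8 : ZMod k) ≠ 0 := by
    exact_mod_cast natCast_ne_zero_of_even (m := 8) hk (by decide) (by omega) (by omega)
  have h10 : (10 : ZMod k) ≠ 0 := by
    exact_mod_cast natCast_ne_zero_of_even (m := 10) hk (by decide) (by omega) (by omega)
  have h12 : (12 : ZMod k) ≠ 0 := by
    exact_mod_cast natCast_ne_zero_of_even (m := 12) hk (by decide) (by omega) (by omega)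
  -- `6` and `8` are not congruent to `0, ±2, ±4` modulo an odd `k ≥ 7`.
  have hfar (c d : ZMod k) (hc : c ∈ B) (hd : d ∈ B) : d ≠ c + 6 ∧ d ≠ c + 8 := by
    constructor <;> rintro rfl <;> rcases hB c hc _ hd with h | h | h | h | h
    · exact h6 (by linear_combination h)
    · exact h4 (by linear_combination h)
    · exact h8 (by linear_combination -h)
    · exact h2 (by linear_combination h)
    · exact h10 (by linear_combination -h)
    · exact h8 (by linear_combination h)
    · exact h6 (by linear_combination h)
    · exact h10 (by linear_combination -h)
    · exact h4 (by linear_combination h)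
    · exact h12 (by linear_combination -h)
  have hmem (c : ZMod k) (hc : c ∈ B) :
      c = b - 4 ∨ c = b - 2 ∨ c = b ∨ c = b + 2 ∨ c = b + 4 := by
    rcases hB b hb c hc with h | h | h | h | h
    · exact .inr (.inr (.inl h))
    · exact .inr (.inr (.inr (.inl h)))
    · exact .inr (.inl (by linear_combination -h))
    · exact .inr (.inr (.inr (.inr h)))
    · exact .inl (by linear_combination -h)
  have hsub : B ⊆ {b - 4, b - 2, b} ∨ B ⊆ {b, b + 2, b + 4} ∨ B ⊆ {b - 2, b, b + 2} := by
    by_cases hlo : b - 4 ∈ B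
    · refine .inl fun c hc => ?_
      rcases hmem c hc with rfl | rfl | rfl | rfl | rfl
      · simp
      · simp
      · simp
      · exact absurd (by ring) (hfar _ _ hlo hc).1
      · exact absurd (by ring) (hfar _ _ hlo hc).2
    by_cases hhi : b + 4 ∈ B
    · refine .inr (.inl fun c hc => ?_)
      rcases hmem c hc with rfl | rfl | rfl | rfl | rfl
      · exact absurd hc hlo
      · exact absurd (by ring) (hfar _ _ hc hhi).1
      · simp
      · simp
      · simp
    · refine .inr (.inr fun c hc => ?_)
      rcases hmem c hc with rfl | rfl | rfl | rfl | rfl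
      · exact absurd hc hlo
      · simp
      · simp
      · simp
      · exact absurd hc hhi
  rcases hsub with h | h | h <;> exact (Finset.card_le_card h).trans Finset.card_le_three

end ZMod

namespace SimpleGraph.Walk

variable {V : Type*} {G : SimpleGraph V}

lemma IsCycle.isCycleMap_getVert {u : V} {c : G.Walk u u} (hc : c.IsCycle) :
    IsCycleMap G (fun i : ZMod c.length => c.getVert i.val) := by
  have h3 := hc.three_le_length
  have : NeZero c.length := ⟨by omega⟩
  have : Fact (1 < c.length) := ⟨by omega⟩
  refine ⟨fun i j h => ZMod.val_injective _ (hc.getVert_injOn' ?_ ?_ h), fun i => ?_⟩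
  · have := i.val_lt; simp only [Set.mem_ofPred_eq]; omega
  · have := j.val_lt; simp only [Set.mem_ofPred_eq]; omega
  simp only
  rw [ZMod.val_add, ZMod.val_one]
  rcases (Nat.lt_or_ge (i.val + 1) c.length) with hlt | hge
  · rw [Nat.mod_eq_of_lt hlt]
    exact c.adj_getVert_succ (by omega)
  · have hi : i.val + 1 = c.length := le_antisymm (i.val_lt) hge
    have := c.adj_getVert_succ (i := i.val) (by omega)
    rw [hi, c.getVert_length] at this
    rwa [hi, Nat.mod_self, c.getVert_zero]

lemma exists_isCycle_odd_length_le {u : V} (p : G.Walk u u) (hp : Odd p.length) :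
    ∃ (v : V) (c : G.Walk v v), c.IsCycle ∧ Odd c.length ∧ c.length ≤ p.length := by
  induction h : p.length using Nat.strong_induction_on generalizing u with
  | _ n ih =>
  subst h
  by_cases htail : p.tail.IsPath
  · refine ⟨u, p, isCycle_iff_isPath_tail_and_le_length.mpr ⟨htail, ?_⟩, hp, le_rfl⟩
    obtain ⟨m, hm⟩ := hp
    rcases Nat.eq_zero_or_pos m with rfl | hm0
    · have hloop := p.adj_getVert_succ (i := 0) (by omega)
      rw [p.getVert_zero, zero_add, show 1 = p.length by omega, p.getVert_length] at hloop
      exact (G.irrefl hloop).elim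
    · omega
  -- A repeated vertex splits `p` into two shorter closed walks, one of which has odd length.
  obtain ⟨s, t, hs, hst, htn, heq⟩ :
      ∃ s t, 0 < s ∧ s < t ∧ t ≤ p.length ∧ p.getVert s = p.getVert t := by
    rw [← IsPath.getVert_injOn_iff, Set.InjOn] at htail
    push Not at htail
    obtain ⟨i, hi, j, hj, hij, hne⟩ := htail
    simp only [Set.mem_ofPred_eq, length_tail, getVert_tail] at hi hj hij
    rcases Nat.lt_or_gt_of_ne hne with h | h
    · exact ⟨i + 1, j + 1, by omega, by omega, by omega, hij⟩
    · exact ⟨j + 1, i + 1, by omega, by omega, by omega, hij.symm⟩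
  let c₁ : G.Walk (p.getVert s) (p.getVert s) :=
    ((p.drop s).take (t - s)).copy rfl (by rw [drop_getVert, heq]; congr 1; omega)
  let c₂ : G.Walk u u := (p.take s).append ((p.drop t).copy heq.symm rfl)
  have hc₁ : c₁.length = t - s := by simp [c₁]; omega
  have hc₂ : c₂.length = s + (p.length - t) := by simp [c₂]; omega
  rcases Nat.even_or_odd (t - s) with he | ho
  · obtain ⟨v, c, hc, hco, hcl⟩ := ih c₂.length (by omega) c₂ (by
      rw [hc₂]; rw [Nat.odd_iff] at hp ⊢; rw [Nat.even_iff] at he; omega) rfl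
    exact ⟨v, c, hc, hco, by omega⟩
  · obtain ⟨v, c, hc, hco, hcl⟩ := ih c₁.length (by omega) c₁ (by rwa [hc₁]) rfl
    exact ⟨v, c, hc, hco, by omega⟩

end SimpleGraph.Walk

lemma SimpleGraph.dist_eq_two_iff {V : Type*} {G : SimpleGraph V} {u v : V} :
    G.dist u v = 2 ↔ u ≠ v ∧ ¬G.Adj u v ∧ (G.commonNeighbors u v).Nonempty := by
  rw [← edist_eq_two_iff, dist, ENat.toNat_eq_iff two_ne_zero]
  rfl

theorem NoShortOddCycle.le_length_of_odd {V : Type*} {G : SimpleGraph V} {k : ℕ}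
    (hG : NoShortOddCycle G k) {u : V} (p : G.Walk u u) (hp : Odd p.length) : k ≤ p.length := by
  obtain ⟨v, c, hc, hodd, hle⟩ := p.exists_isCycle_odd_length_le hp
  by_contra! hlt
  exact hG c.length hodd hc.three_le_length (by omega) _ hc.isCycleMap_getVert

lemma Finset.sum_Icc_two_sub_one {M : Type*} [AddCommMonoid M] (g : ℕ → M) {k : ℕ}
    (hk : 5 ≤ k) :
    ∑ i ∈ Icc 2 (k - 1), g i = g 2 + g 3 + ∑ i ∈ range (k - 5), g (i + 4) + g (k - 1) := by
  obtain ⟨m, rfl⟩ : ∃ m, k = m + 5 := ⟨k - 5, by omega⟩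
  rw [← Finset.Ico_add_one_right_eq_Icc, sum_Ico_eq_sum_range,
    show m + 5 - 1 + 1 - 2 = m + 2 + 1 by omega,
    sum_range_succ, sum_range_succ', sum_range_succ']
  simp only [add_zero, add_tsub_cancel_right]
  rw [show 2 + (m + 2) = m + 4 by omega]
  simp only [show ∀ i, 2 + (i + 1 + 1) = i + 4 by omega, show 2 + (0 + 1) = 3 by rfl]
  abel

open Classical in
lemma Finset.sum_natCard_eq_sum_card_filter {ι V : Type*} [Fintype ι] [Fintype V]
    (S : ι → Set V) : ∑ j, Nat.card (S j) = ∑ w, #{j | w ∈ S j} := by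
  simp only [Nat.card_eq_fintype_card, Fintype.card_subtype, card_filter]
  exact sum_comm

lemma ZMod.sum_range_natCast {M : Type*} [AddCommMonoid M] {k : ℕ} [NeZero k] (g : ZMod k → M) :
    ∑ j ∈ range k, g j = ∑ j, g j :=
  sum_nbij' Nat.cast ZMod.val (fun _ _ => mem_univ _)
    (fun j _ => mem_range.2 j.val_lt) (fun _ hj => ZMod.val_natCast_of_lt (mem_range.1 hj))
    (fun j _ => ZMod.natCast_zmod_val j) (fun _ _ => rfl)

section InducedPaths

variable {V : Type*} {G : SimpleGraph V} {q : ℕ → V}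

lemma isInducedPathOn_congr {q' : ℕ → V} {n : ℕ} (h : ∀ a ≤ n, q a = q' a) :
    IsInducedPathOn G q n ↔ IsInducedPathOn G q' n := by
  unfold IsInducedPathOn
  constructor <;> rintro ⟨hinj, hadj⟩ <;> refine ⟨fun a b ha hb => ?_, fun a b ha hb => ?_⟩
  · rw [← h a ha, ← h b hb]; exact hinj a b ha hb
  · rw [← h a ha, ← h b hb]; exact hadj a b ha hb
  · rw [h a ha, h b hb]; exact hinj a b ha hb
  · rw [h a ha, h b hb]; exact hadj a b ha hb

lemma isInducedPathOn_succ_iff {n : ℕ} :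
    IsInducedPathOn G q (n + 1) ↔ IsInducedPathOn G q n ∧ G.Adj (q n) (q (n + 1)) ∧
      (∀ a < n, ¬G.Adj (q a) (q (n + 1))) ∧ ∀ a ≤ n, q a ≠ q (n + 1) := by
  constructor
  · rintro ⟨hinj, hadj⟩
    refine ⟨⟨fun a b ha hb => hinj a b (by omega) (by omega),
        fun a b ha hb => hadj a b (by omega) (by omega)⟩,
      (hadj n (n + 1) (by omega) le_rfl).2 (by omega), fun a ha h => ?_, fun a ha h => ?_⟩
    · have := (hadj a (n + 1) (by omega) le_rfl).1 h; omega
    · have := hinj a (n + 1) (by omega) le_rfl h; omega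
  · rintro ⟨⟨hinj, hadj⟩, hlast, hfar, hne⟩
    have hadj_last (b : ℕ) (hb : b ≤ n) : G.Adj (q b) (q (n + 1)) ↔ b = n := by
      refine ⟨fun h => ?_, fun h => h ▸ hlast⟩
      by_contra hbn
      exact hfar b (by omega) h
    refine ⟨fun a b ha hb h => ?_, fun a b ha hb => ?_⟩
    · obtain rfl | ha := (by omega : a = n + 1 ∨ a ≤ n) <;>
        obtain rfl | hb := (by omega : b = n + 1 ∨ b ≤ n)
      · rfl
      · exact absurd h.symm (hne b hb)
      · exact absurd h (hne a ha)
      · exact hinj a b ha hb h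
    · obtain rfl | ha := (by omega : a = n + 1 ∨ a ≤ n) <;>
        obtain rfl | hb := (by omega : b = n + 1 ∨ b ≤ n)
      · simp
      · rw [G.adj_comm, hadj_last b hb]; omega
      · rw [hadj_last a ha]; omega
      · exact hadj a b ha hb

lemma isInducedCycleOn_iff {k : ℕ} (hk : 3 ≤ k) :
    IsInducedCycleOn G q k ↔ IsInducedPathOn G q (k - 2) ∧ G.Adj (q (k - 2)) (q (k - 1)) ∧
      G.Adj (q 0) (q (k - 1)) ∧ (∀ a, 0 < a → a < k - 2 → ¬G.Adj (q a) (q (k - 1))) ∧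
      ∀ a ≤ k - 2, q a ≠ q (k - 1) := by
  constructor
  · rintro ⟨hinj, hadj⟩
    refine ⟨⟨fun a b ha hb => hinj a b (by omega) (by omega),
        fun a b ha hb => by rw [hadj a b (by omega) (by omega)]; omega⟩,
      (hadj (k - 2) (k - 1) (by omega) (by omega)).2 (by omega),
      (hadj 0 (k - 1) (by omega) (by omega)).2 (by omega), fun a ha0 ha h => ?_,
      fun a ha h => ?_⟩
    · have := (hadj a (k - 1) (by omega) (by omega)).1 h; omega
    · have := hinj a (k - 1) (by omega) (by omega) h; omega
  · rintro ⟨⟨hinj, hadj⟩, hlast, hfirst, hfar, hne⟩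
    have hadj_last (b : ℕ) (hb : b ≤ k - 2) :
        G.Adj (q b) (q (k - 1)) ↔ b = k - 2 ∨ b = 0 := by
      refine ⟨fun h => ?_, by rintro (rfl | rfl) <;> assumption⟩
      by_contra hb'
      exact hfar b (by omega) (by omega) h
    refine ⟨fun a b ha hb h => ?_, fun a b ha hb => ?_⟩
    · obtain rfl | ha := (by omega : a = k - 1 ∨ a ≤ k - 2) <;>
        obtain rfl | hb := (by omega : b = k - 1 ∨ b ≤ k - 2)
      · rfl
      · exact absurd h.symm (hne b hb)
      · exact absurd h (hne a ha)
      · exact hinj a b ha hb h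
    · obtain rfl | ha := (by omega : a = k - 1 ∨ a ≤ k - 2) <;>
        obtain rfl | hb := (by omega : b = k - 1 ∨ b ≤ k - 2)
      · simp only [G.irrefl, false_iff]; omega
      · rw [G.adj_comm, hadj_last b hb]; omega
      · rw [hadj_last a ha]; omega
      · rw [hadj a b ha hb]; omega

end InducedPaths

structure IsShortestOddCycle {V : Type*} (G : SimpleGraph V) {k : ℕ} (f : ZMod k → V) :
    Prop where
  isCycleMap : IsCycleMap G f
  odd : Odd k
  noShortOddCycle : NoShortOddCycle G k

lemma IsCycleMap.exists_walk_length {V : Type*} {G : SimpleGraph V} {k : ℕ} {f : ZMod k → V}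
    (hf : IsCycleMap G f) (x : ZMod k) (d : ℕ) :
    ∃ p : G.Walk (f x) (f (x + d)), p.length = d := by
  induction d with
  | zero => exact ⟨Walk.nil.copy rfl (by simp), by simp⟩
  | succ d ih =>
    obtain ⟨p, hp⟩ := ih
    exact ⟨(p.concat (hf.2 _)).copy rfl (by push_cast; ring_nf), by simp [hp]⟩

namespace IsShortestOddCycle

variable {V : Type*} {G : SimpleGraph V} {k : ℕ} {f : ZMod k → V}

lemma one_lt (hC : IsShortestOddCycle G f) : 1 < k := by
  obtain ⟨m, hm⟩ := hC.odd
  rcases Nat.eq_zero_or_pos m with rfl | hm0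
  · subst hm
    have := hC.isCycleMap.2 0
    rw [Subsingleton.elim (0 + 1 : ZMod 1) 0] at this
    exact absurd this G.irrefl
  · omega

lemma neZero (hC : IsShortestOddCycle G f) : NeZero k := ⟨by have := hC.one_lt; omega⟩

/-- Closing `p` up along either arc of the cycle gives two closed walks of total length
`2 * p.length + k`; the odd one has length at least `k`. -/
lemma exists_eq_add_of_walk (hC : IsShortestOddCycle G f) {x y : ZMod k}
    (p : G.Walk (f x) (f y)) (hp : p.length < k) :
    ∃ d ≤ p.length, Even (p.length + d) ∧ (y = x + d ∨ x = y + d) := by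
  have := hC.neZero
  have hG := hC.noShortOddCycle
  by_cases hxy : x = y
  · subst hxy
    refine ⟨0, Nat.zero_le _, ?_, Or.inl (by simp)⟩
    by_contra hodd
    rw [add_zero, Nat.not_even_iff_odd] at hodd
    exact absurd (hG.le_length_of_odd p hodd) (by omega)
  have harc (a b : ZMod k) : ∃ q : G.Walk (f a) (f b), q.length = (b - a).val := by
    obtain ⟨q, hq⟩ := hC.isCycleMap.exists_walk_length a (b - a).val
    exact ⟨q.copy rfl (by rw [ZMod.natCast_zmod_val, add_sub_cancel]), by simpa using hq⟩
  obtain ⟨q₁, hq₁⟩ := harc y x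
  obtain ⟨q₂, hq₂⟩ := harc x y
  have hsum : (y - x).val + (x - y).val = k := by
    have : NeZero (y - x) := ⟨sub_ne_zero.mpr (Ne.symm hxy)⟩
    rw [show x - y = -(y - x) by ring, ZMod.val_neg_of_ne_zero]
    have := (y - x).val_lt
    omega
  have h₁ := hG.le_length_of_odd (p.append q₁)
  have h₂ := hG.le_length_of_odd (p.append q₂.reverse)
  simp only [Walk.length_append, Walk.length_reverse, hq₁, hq₂, Nat.odd_iff] at h₁ h₂
  have hk := Nat.odd_iff.mp hC.odd
  simp only [Nat.even_iff]
  rcases Nat.mod_two_eq_zero_or_one (p.length + (x - y).val) with he | ho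
  · exact ⟨(x - y).val, by omega, he, .inr (by rw [ZMod.natCast_zmod_val]; ring)⟩
  · exact ⟨(y - x).val, by omega, by omega, .inl (by rw [ZMod.natCast_zmod_val]; ring)⟩

lemma adj_iff (hC : IsShortestOddCycle G f) (x y : ZMod k) :
    G.Adj (f x) (f y) ↔ y = x + 1 ∨ x = y + 1 := by
  refine ⟨fun h => ?_, ?_⟩
  swap
  · rintro (rfl | rfl)
    exacts [hC.isCycleMap.2 x, (hC.isCycleMap.2 y).symm]
  obtain ⟨d, hd, he, hxy⟩ := hC.exists_eq_add_of_walk h.toWalk (by simpa using hC.one_lt)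
  simp only [Adj.toWalk, Walk.length_cons,
    Walk.length_nil] at hd he
  obtain rfl : d = 1 := by rw [Nat.even_iff] at he; omega
  simpa using hxy

lemma isInducedPathOn_arc (hC : IsShortestOddCycle G f) (j : ZMod k) {n : ℕ} (hn : n + 1 < k) :
    IsInducedPathOn G (fun a : ℕ => f (j + a)) n := by
  refine ⟨fun a b ha hb h => ?_, fun a b ha hb => ?_⟩
  · exact (ZMod.natCast_inj_of_lt (by omega) (by omega)).1
      (add_left_cancel (hC.isCycleMap.1 h))
  rw [hC.adj_iff]
  constructor
  · rintro (h | h)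
    · refine .inl <| (ZMod.natCast_inj_of_lt (k := k) (by omega) (by omega)).1 ?_
      push_cast; linear_combination h
    · refine .inr <| (ZMod.natCast_inj_of_lt (k := k) (by omega) (by omega)).1 ?_
      push_cast; linear_combination h
  · rintro (rfl | rfl)
    · left; push_cast; ring
    · right; push_cast; ring

variable {x y : ZMod k} {u : V}

lemma eq_or_eq_add_two_of_adj (hC : IsShortestOddCycle G f) (hk : 3 ≤ k) (hx : G.Adj (f x) u)
    (hy : G.Adj u (f y)) : y = x ∨ y = x + 2 ∨ x = y + 2 := by
  obtain ⟨d, hd, he, h⟩ := hC.exists_eq_add_of_walk (.cons hx (.cons hy .nil)) (by simp; omega)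
  simp only [Walk.length_cons, Walk.length_nil, Nat.even_iff] at hd he
  obtain rfl | rfl : d = 0 ∨ d = 2 := by omega
  · simp only [Nat.cast_zero, add_zero] at h; exact .inl (h.elim id Eq.symm)
  · push_cast at h; exact .inr h

lemma eq_add_one_or_three_of_adj (hC : IsShortestOddCycle G f) (hk : 4 ≤ k) {u' : V}
    (hx : G.Adj (f x) u) (hu : G.Adj u u') (hy : G.Adj u' (f y)) :
    y = x + 1 ∨ x = y + 1 ∨ y = x + 3 ∨ x = y + 3 := by
  obtain ⟨d, hd, he, h⟩ :=
    hC.exists_eq_add_of_walk (.cons hx (.cons hu (.cons hy .nil))) (by simp; omega)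
  simp only [Walk.length_cons, Walk.length_nil, Nat.even_iff] at hd he
  obtain rfl | rfl : d = 1 ∨ d = 3 := by omega
  · push_cast at h; tauto
  · push_cast at h; tauto

lemma eq_add_even_of_adj (hC : IsShortestOddCycle G f) (hk : 5 ≤ k) {u₁ u₂ u₃ : V}
    (hx : G.Adj (f x) u₁) (h₁ : G.Adj u₁ u₂) (h₂ : G.Adj u₂ u₃)
    (hy : G.Adj u₃ (f y)) :
    y = x ∨ y = x + 2 ∨ x = y + 2 ∨ y = x + 4 ∨ x = y + 4 := by
  obtain ⟨d, hd, he, h⟩ :=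
    hC.exists_eq_add_of_walk (.cons hx (.cons h₁ (.cons h₂ (.cons hy .nil)))) (by simp; omega)
  simp only [Walk.length_cons, Walk.length_nil, Nat.even_iff] at hd he
  obtain rfl | rfl | rfl : d = 0 ∨ d = 2 ∨ d = 4 := by omega
  · simp only [Nat.cast_zero, add_zero] at h; exact .inl (h.elim id Eq.symm)
  · push_cast at h; tauto
  · push_cast at h; tauto

end IsShortestOddCycle

section GoodSequences

variable {V : Type*} {G : SimpleGraph V} {k : ℕ} {f : ZMod k → V} {j : ZMod k} {w : V}

lemma goodRot_natCast (hk : 4 ≤ k) {a : ℕ} (ha : a < k) (h2 : a ≠ 2) (h3 : a ≠ 3) :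
    goodRot f j a = f (j + a) := by
  have hne (b : ℕ) (hb : b < k) (hab : a ≠ b) : (a : ZMod k) ≠ b :=
    fun h => hab ((ZMod.natCast_inj_of_lt ha hb).1 h)
  simp only [goodRot, goodOfCycle]
  rw [if_neg (by exact_mod_cast hne 2 (by omega) h2),
    if_neg (by exact_mod_cast hne 3 (by omega) h3)]

lemma goodRot_zero (hk : 4 ≤ k) : goodRot f j 0 = f j := by
  simpa using goodRot_natCast (f := f) (j := j) hk (a := 0) (by omega) (by omega) (by omega)

lemma goodRot_one (hk : 4 ≤ k) : goodRot f j 1 = f (j + 1) := by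
  simpa using goodRot_natCast (f := f) (j := j) hk (a := 1) (by omega) (by omega) (by omega)

lemma goodRot_two : goodRot f j 2 = f (j + 3) := by
  simp [goodRot, goodOfCycle]

lemma goodRot_three (hk : 4 ≤ k) : goodRot f j 3 = f (j + 2) := by
  have h : (3 : ZMod k) ≠ 2 := by
    intro h
    exact ZMod.natCast_ne_zero_of_lt (k := k) (m := 1) one_ne_zero (by omega)
      (by push_cast; linear_combination h)
  simp [goodRot, goodOfCycle, h]

lemma seqAt_self (z : ZMod k → V) (i : ℕ) : seqAt z w i i = w := if_pos rfl

lemma seqAt_goodRot (hk : 4 ≤ k) {i a : ℕ} (ha : a < k) (hai : a ≠ i) :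
    seqAt (goodRot f j) w i a = f (j + a) := by
  unfold seqAt
  rw [if_neg hai]
  split_ifs with h2 h3
  · subst h2; rw [goodRot_three hk]; push_cast; rfl
  · subst h3; rw [goodRot_two]; push_cast; rfl
  · exact goodRot_natCast hk ha h2 h3

lemma mem_Aset_one (hk : 4 ≤ k) : w ∈ Aset G k (goodRot f j) 1 ↔ G.Adj (f j) w := by
  simp [Aset, goodRot_zero hk]

lemma mem_Aset_two (hk : 4 ≤ k) :
    w ∈ Aset G k (goodRot f j) 2 ↔ ¬G.Adj (f j) w ∧ G.dist (f (j + 1)) w = 2 := by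
  simp [Aset, goodRot_zero hk, goodRot_one hk]

lemma mem_Aset_three (hk : 4 ≤ k) :
    w ∈ Aset G k (goodRot f j) 3 ↔ G.Adj (f (j + 1)) w ∧ G.Adj (f (j + 3)) w := by
  simp [Aset, goodRot_one hk, goodRot_two]

lemma IsShortestOddCycle.mem_Aset_succ (hC : IsShortestOddCycle G f) {n : ℕ} (hn : 3 ≤ n)
    (hnk : n + 3 ≤ k) :
    w ∈ Aset G k (goodRot f j) (n + 1) ↔ G.Adj (f (j + n)) w ∧
      (∀ a < n, ¬G.Adj (f (j + a)) w) ∧ ∀ a ≤ n, f (j + a) ≠ w := by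
  have hseq (a : ℕ) (ha : a ≤ n) : seqAt (goodRot f j) w (n + 1) a = f (j + a) :=
    seqAt_goodRot (by omega) (by omega) (by omega)
  have hA : Aset G k (goodRot f j) (n + 1) =
      {w | IsInducedPathOn G (seqAt (goodRot f j) w (n + 1)) (n + 1)} := by
    simp only [Aset]
    rw [if_neg (by omega), if_neg (by omega), if_neg (by omega), if_neg (by omega),
      if_neg (by omega)]
  rw [hA, Set.mem_ofPred_eq, isInducedPathOn_succ_iff, isInducedPathOn_congr hseq, seqAt_self,
    hseq n le_rfl, and_iff_right (hC.isInducedPathOn_arc j (by omega))]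
  refine and_congr Iff.rfl
    (and_congr (forall₂_congr fun a ha => ?_) (forall₂_congr fun a ha => ?_))
  · rw [hseq a ha.le]
  · rw [hseq a ha]

lemma IsShortestOddCycle.mem_Aset_sub_one (hC : IsShortestOddCycle G f) (hk : 5 ≤ k) :
    w ∈ Aset G k (goodRot f j) (k - 1) ↔ G.Adj (f (j + (k - 2 : ℕ))) w ∧ G.Adj (f j) w ∧
      (∀ a, 0 < a → a < k - 2 → ¬G.Adj (f (j + a)) w) ∧
      ∀ a ≤ k - 2, f (j + a) ≠ w := by
  have hseq (a : ℕ) (ha : a ≤ k - 2) : seqAt (goodRot f j) w (k - 1) a = f (j + a) :=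
    seqAt_goodRot (by omega) (by omega) (by omega)
  have hA : Aset G k (goodRot f j) (k - 1) =
      {w | IsInducedCycleOn G (seqAt (goodRot f j) w (k - 1)) k} := by
    simp only [Aset]
    rw [if_neg (by omega), if_neg (by omega), if_neg (by omega), if_neg (by omega), if_true]
  rw [hA, Set.mem_ofPred_eq, isInducedCycleOn_iff (by omega), isInducedPathOn_congr hseq,
    seqAt_self, hseq _ le_rfl, hseq 0 (by omega),
    and_iff_right (hC.isInducedPathOn_arc j (by omega))]
  simp only [Nat.cast_zero, add_zero]
  refine and_congr Iff.rfl (and_congr Iff.rfl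
    (and_congr (forall_congr' fun a => forall₂_congr fun ha₀ ha => ?_)
      (forall₂_congr fun a ha => ?_)))
  · rw [hseq a ha.le]
  · rw [hseq a ha]

end GoodSequences

namespace IsShortestOddCycle

variable {V : Type*} {G : SimpleGraph V} {k : ℕ} {f : ZMod k → V} {w : V} {a : ZMod k}

lemma exists_nbrs_or_subsingleton (hC : IsShortestOddCycle G f) (hk : 7 ≤ k) (w : V) :
    (∃ a, ∀ i, G.Adj w (f i) ↔ i = a - 1 ∨ i = a + 1) ∨
      ∀ b c, G.Adj w (f b) → G.Adj w (f c) → b = c := by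
  refine or_iff_not_imp_right.mpr fun h => ?_
  push Not at h
  obtain ⟨b, c, hb, hc, hbc⟩ := h
  obtain ⟨b, hb, hb₂⟩ : ∃ b, G.Adj w (f b) ∧ G.Adj w (f (b + 2)) := by
    rcases hC.eq_or_eq_add_two_of_adj (by omega) hb.symm hc with h | h | h
    · exact absurd h.symm hbc
    · exact ⟨b, hb, h ▸ hc⟩
    · exact ⟨c, hc, h ▸ hb⟩
  refine ⟨b + 1, fun i => ⟨fun hi => ?_, ?_⟩⟩
  · rcases hC.eq_or_eq_add_two_of_adj (by omega) hb.symm hi with h | h | h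
    · left; linear_combination h
    · right; linear_combination h
    rcases hC.eq_or_eq_add_two_of_adj (by omega) hb₂.symm hi with h' | h' | h'
    · exact absurd (by linear_combination -h - h') (ZMod.ofNat_ne_zero_of_lt 4 (by omega))
    · exact absurd (by linear_combination -h - h') (ZMod.ofNat_ne_zero_of_lt 6 (by omega))
    · exact absurd (by linear_combination h' - h) (ZMod.ofNat_ne_zero_of_lt 2 (by omega))
  · rintro (rfl | rfl)
    · simpa using hb
    · convert hb₂ using 2; ring

lemma eq_of_apply_eq_of_nbrs (hC : IsShortestOddCycle G f) (hk : 5 ≤ k)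
    (ha : ∀ i, G.Adj w (f i) ↔ i = a - 1 ∨ i = a + 1) {x : ZMod k} (hx : f x = w) :
    x = a := by
  subst hx
  have hsucc := (ha (x + 1)).1 (hC.isCycleMap.2 x)
  have hpred := (ha (x - 1)).1 (by simpa using (hC.isCycleMap.2 (x - 1)).symm)
  rcases hsucc with h | h
  · rcases hpred with h' | h'
    · exact absurd (by linear_combination h - h') (ZMod.ofNat_ne_zero_of_lt 2 (by omega))
    · exact absurd (by linear_combination h - h') (ZMod.ofNat_ne_zero_of_lt 4 (by omega))
  · linear_combination h

end IsShortestOddCycle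

open Classical in
noncomputable def memIndices {V : Type*} (G : SimpleGraph V) (k : ℕ) [NeZero k]
    (f : ZMod k → V) (w : V) (i : ℕ) : Finset (ZMod k) :=
  {j | w ∈ Aset G k (goodRot f j) i}

noncomputable def contribution {V : Type*} (G : SimpleGraph V) (k : ℕ) [NeZero k]
    (f : ZMod k → V) (w : V) : ℝ :=
  #(memIndices G k f w 1) / 2 + ∑ i ∈ Icc 2 (k - 1), (#(memIndices G k f w i) : ℝ)

lemma sum_natCard_Aset_eq_sum_contribution {V : Type*} [Fintype V] (G : SimpleGraph V) (k : ℕ)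
    [NeZero k] (f : ZMod k → V) :
    ∑ j ∈ range k, ((Nat.card (Aset G k (goodRot f j) 1) : ℝ) / 2 +
        ∑ i ∈ Icc 2 (k - 1), (Nat.card (Aset G k (goodRot f j) i) : ℝ)) =
      ∑ w, contribution G k f w := by
  have hcount (i : ℕ) : ∑ j : ZMod k, (Nat.card (Aset G k (goodRot f j) i) : ℝ) =
      ∑ w, (#(memIndices G k f w i) : ℝ) := by
    exact_mod_cast sum_natCard_eq_sum_card_filter fun j => Aset G k (goodRot f j) i
  rw [ZMod.sum_range_natCast (fun j => (Nat.card (Aset G k (goodRot f j) 1) : ℝ) / 2 +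
      ∑ i ∈ Icc 2 (k - 1), (Nat.card (Aset G k (goodRot f j) i) : ℝ)),
    sum_add_distrib, ← sum_div, hcount, sum_comm]
  simp only [hcount]
  rw [sum_div, sum_comm, ← sum_add_distrib]
  rfl

section Counting

variable {V : Type*} {G : SimpleGraph V} {k : ℕ} [NeZero k] {f : ZMod k → V} {w : V}
  {a j : ZMod k}

lemma mem_memIndices {i : ℕ} : j ∈ memIndices G k f w i ↔ w ∈ Aset G k (goodRot f j) i := by
  simp [memIndices]

lemma contribution_eq (hk : 5 ≤ k) : contribution G k f w =
    #(memIndices G k f w 1) / 2 + #(memIndices G k f w 2) + #(memIndices G k f w 3) +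
      ∑ n ∈ range (k - 5), (#(memIndices G k f w (n + 3 + 1)) : ℝ) +
      #(memIndices G k f w (k - 1)) := by
  rw [contribution, sum_Icc_two_sub_one _ hk]
  ring

lemma card_memIndices_one_of_nbrs (hk : 7 ≤ k)
    (ha : ∀ i, G.Adj w (f i) ↔ i = a - 1 ∨ i = a + 1) : #(memIndices G k f w 1) = 2 := by
  have : memIndices G k f w 1 = {a - 1, a + 1} := by
    ext j
    rw [mem_memIndices, mem_Aset_one (by omega), G.adj_comm, ha]
    simp
  rw [this, card_pair]
  intro h
  exact ZMod.ofNat_ne_zero_of_lt (k := k) 2 (by omega) (by linear_combination -h)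

lemma IsShortestOddCycle.memIndices_two_of_nbrs (hC : IsShortestOddCycle G f) (hk : 7 ≤ k)
    (ha : ∀ i, G.Adj w (f i) ↔ i = a - 1 ∨ i = a + 1) : memIndices G k f w 2 = {a - 3} := by
  have hlo : G.Adj w (f (a - 1)) := (ha _).2 (.inl rfl)
  have hhi : G.Adj w (f (a + 1)) := (ha _).2 (.inr rfl)
  ext j
  rw [mem_memIndices, mem_Aset_two (by omega), mem_singleton, G.adj_comm, ha, dist_eq_two_iff]
  constructor
  · rintro ⟨hj, -, -, u, hu⟩
    rw [mem_commonNeighbors] at hu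
    rcases hC.eq_add_one_or_three_of_adj (by omega) hu.1 hu.2.symm hlo with h | h | h | h
    · linear_combination -h
    · exact absurd (.inl (by linear_combination h)) hj
    · rcases hC.eq_add_one_or_three_of_adj (by omega) hu.1 hu.2.symm hhi with h' | h' | h' | h'
      · exact absurd (by linear_combination h' - h) (ZMod.ofNat_ne_zero_of_lt 4 (by omega))
      · exact absurd (by linear_combination -h - h') (ZMod.ofNat_ne_zero_of_lt 6 (by omega))
      · exact absurd (by linear_combination h' - h) (ZMod.ofNat_ne_zero_of_lt 2 (by omega))
      · refine absurd (by linear_combination -h - h') (?_ : (8 : ZMod k) ≠ 0)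
        exact_mod_cast ZMod.natCast_ne_zero_of_even (m := 8) hC.odd (by decide) (by omega)
          (by omega)
    · exact absurd (.inr (by linear_combination h)) hj
  · rintro rfl
    refine ⟨?_, fun he => ?_, fun hadj => ?_, f (a - 1), ?_⟩
    · rintro (h | h)
      · exact ZMod.ofNat_ne_zero_of_lt (k := k) 2 (by omega) (by linear_combination -h)
      · exact ZMod.ofNat_ne_zero_of_lt (k := k) 4 (by omega) (by linear_combination -h)
    · have := hC.eq_of_apply_eq_of_nbrs (by omega) ha he
      exact ZMod.ofNat_ne_zero_of_lt (k := k) 2 (by omega) (by linear_combination -this)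
    · rcases (ha _).1 hadj.symm with h | h
      · exact ZMod.natCast_ne_zero_of_lt (k := k) (m := 1) one_ne_zero (by omega)
          (by push_cast; linear_combination -h)
      · exact ZMod.ofNat_ne_zero_of_lt (k := k) 3 (by omega) (by linear_combination -h)
    · rw [mem_commonNeighbors]
      refine ⟨?_, hlo⟩
      convert hC.isCycleMap.2 (a - 2) using 2 <;> ring

lemma memIndices_three_of_nbrs (hk : 7 ≤ k)
    (ha : ∀ i, G.Adj w (f i) ↔ i = a - 1 ∨ i = a + 1) : memIndices G k f w 3 = {a - 2} := by
  ext j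
  rw [mem_memIndices, mem_Aset_three (by omega), mem_singleton, G.adj_comm, ha, G.adj_comm, ha]
  constructor
  · rintro ⟨h | h, h' | h'⟩
    · exact absurd (by linear_combination h' - h) (ZMod.ofNat_ne_zero_of_lt 2 (by omega))
    · linear_combination h
    · exact absurd (by linear_combination h' - h) (ZMod.ofNat_ne_zero_of_lt 4 (by omega))
    · exact absurd (by linear_combination h' - h) (ZMod.ofNat_ne_zero_of_lt 2 (by omega))
  · rintro rfl
    exact ⟨.inl (by ring), .inr (by ring)⟩

lemma IsShortestOddCycle.memIndices_succ_of_nbrs (hC : IsShortestOddCycle G f) {n : ℕ}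
    (hn : 3 ≤ n) (hnk : n + 3 ≤ k) (ha : ∀ i, G.Adj w (f i) ↔ i = a - 1 ∨ i = a + 1) :
    memIndices G k f w (n + 1) = {a - 1 - n} := by
  ext j
  rw [mem_memIndices, hC.mem_Aset_succ hn hnk, mem_singleton]
  simp only [G.adj_comm _ w, ha]
  constructor
  · rintro ⟨h | h, hfar, -⟩
    · linear_combination h
    · refine absurd (.inl ?_) (hfar (n - 2) (by omega))
      rw [Nat.cast_sub (by omega)]
      linear_combination h
  · rintro rfl
    refine ⟨.inl (by ring), fun b hb h => ?_, fun b hb h => ?_⟩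
    · have hb' : b = n ∨ b = n + 2 := by
        rcases h with h | h
        · refine .inl ((ZMod.natCast_inj_of_lt (k := k) (by omega) (by omega)).1 ?_)
          linear_combination h
        · refine .inr ((ZMod.natCast_inj_of_lt (k := k) (by omega) (by omega)).1 ?_)
          push_cast; linear_combination h
      omega
    · have := hC.eq_of_apply_eq_of_nbrs (by omega) ha h
      have := (ZMod.natCast_inj_of_lt (k := k) (a := b) (b := n + 1) (by omega) (by omega)).1
        (by push_cast; linear_combination this)
      omega

lemma IsShortestOddCycle.memIndices_sub_one_of_nbrs (hC : IsShortestOddCycle G f) (hk : 7 ≤ k)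
    (ha : ∀ i, G.Adj w (f i) ↔ i = a - 1 ∨ i = a + 1) :
    memIndices G k f w (k - 1) = {a + 1} := by
  have hk₂ : ((k - 2 : ℕ) : ZMod k) = -2 := by
    rw [Nat.cast_sub (by omega), ZMod.natCast_self]; simp
  have hk₁ : ((k - 1 : ℕ) : ZMod k) = -1 := by
    rw [Nat.cast_sub (by omega), ZMod.natCast_self]; simp
  ext j
  rw [mem_memIndices, hC.mem_Aset_sub_one (by omega), mem_singleton, hk₂]
  simp only [G.adj_comm _ w, ha]
  constructor
  · rintro ⟨h' | h', h | h, -⟩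
    · exact absurd (by linear_combination h - h') (ZMod.ofNat_ne_zero_of_lt 2 (by omega))
    · exact h
    · exact absurd (by linear_combination h - h') (ZMod.ofNat_ne_zero_of_lt 4 (by omega))
    · exact absurd (by linear_combination h - h') (ZMod.ofNat_ne_zero_of_lt 2 (by omega))
  · rintro rfl
    refine ⟨.inl (by ring), .inr rfl, fun b hb₀ hb h => ?_, fun b hb h => ?_⟩
    · rcases h with h | h
      · have := (ZMod.natCast_inj_of_lt (k := k) (a := b) (b := k - 2) (by omega) (by omega)).1
          (by rw [hk₂]; linear_combination h)
        omega
      · have := (ZMod.natCast_inj_of_lt (k := k) (a := b) (b := 0) (by omega) (by omega)).1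
          (by push_cast; linear_combination h)
        omega
    · have := hC.eq_of_apply_eq_of_nbrs (by omega) ha h
      have := (ZMod.natCast_inj_of_lt (k := k) (a := b) (b := k - 1) (by omega) (by omega)).1
        (by rw [hk₁]; linear_combination this)
      omega

lemma IsShortestOddCycle.contribution_of_nbrs (hC : IsShortestOddCycle G f) (hk : 7 ≤ k)
    (ha : ∀ i, G.Adj w (f i) ↔ i = a - 1 ∨ i = a + 1) : contribution G k f w = k - 1 := by
  rw [contribution_eq (by omega), card_memIndices_one_of_nbrs hk ha,
    hC.memIndices_two_of_nbrs hk ha, memIndices_three_of_nbrs hk ha,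
    hC.memIndices_sub_one_of_nbrs hk ha,
    sum_congr rfl fun n hn => by
      rw [hC.memIndices_succ_of_nbrs (by omega) (by have := mem_range.1 hn; omega) ha]]
  simp only [card_singleton, sum_const, card_range, nsmul_eq_mul]
  rw [Nat.cast_sub (by omega)]
  push_cast
  ring

lemma card_memIndices_one_le_of_subsingleton (hk : 7 ≤ k)
    (hw : ∀ b c, G.Adj w (f b) → G.Adj w (f c) → b = c) : #(memIndices G k f w 1) ≤ 1 := by
  refine card_le_one.2 fun j hj j' hj' => ?_
  rw [mem_memIndices, mem_Aset_one (by omega)] at hj hj'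
  exact hw j j' hj.symm hj'.symm

lemma IsShortestOddCycle.card_memIndices_two_le (hC : IsShortestOddCycle G f) (hk : 7 ≤ k) :
    #(memIndices G k f w 2) ≤ 3 := by
  rw [← card_image_of_injective _ (add_left_injective 1)]
  refine ZMod.card_le_three_of_forall_eq_add_even hC.odd hk fun b hb c hc => ?_
  obtain ⟨j, hj, rfl⟩ := mem_image.1 hb
  obtain ⟨j', hj', rfl⟩ := mem_image.1 hc
  rw [mem_memIndices, mem_Aset_two (by omega), dist_eq_two_iff] at hj hj'
  obtain ⟨u, hu, hwu⟩ := hj.2.2.2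
  obtain ⟨u', hu', hwu'⟩ := hj'.2.2.2
  exact hC.eq_add_even_of_adj (by omega) hu hwu.symm hwu' hu'.symm

lemma memIndices_three_of_subsingleton (hk : 7 ≤ k)
    (hw : ∀ b c, G.Adj w (f b) → G.Adj w (f c) → b = c) : memIndices G k f w 3 = ∅ := by
  refine eq_empty_of_forall_notMem fun j hj => ?_
  rw [mem_memIndices, mem_Aset_three (by omega)] at hj
  have := hw _ _ hj.1.symm hj.2.symm
  exact ZMod.ofNat_ne_zero_of_lt (k := k) 2 (by omega) (by linear_combination -this)

lemma IsShortestOddCycle.card_memIndices_succ_le_of_subsingleton (hC : IsShortestOddCycle G f)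
    {n : ℕ} (hn : 3 ≤ n) (hnk : n + 3 ≤ k)
    (hw : ∀ b c, G.Adj w (f b) → G.Adj w (f c) → b = c) :
    #(memIndices G k f w (n + 1)) ≤ 1 := by
  refine card_le_one.2 fun j hj j' hj' => ?_
  rw [mem_memIndices, hC.mem_Aset_succ hn hnk] at hj hj'
  exact add_right_cancel (hw _ _ hj.1.symm hj'.1.symm)

lemma IsShortestOddCycle.memIndices_sub_one_of_subsingleton (hC : IsShortestOddCycle G f)
    (hk : 7 ≤ k) (hw : ∀ b c, G.Adj w (f b) → G.Adj w (f c) → b = c) :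
    memIndices G k f w (k - 1) = ∅ := by
  refine eq_empty_of_forall_notMem fun j hj => ?_
  rw [mem_memIndices, hC.mem_Aset_sub_one (by omega)] at hj
  have := hw _ _ hj.1.symm hj.2.1.symm
  exact ZMod.natCast_ne_zero_of_lt (k := k) (m := k - 2) (by omega) (by omega)
    (by linear_combination this)

lemma IsShortestOddCycle.contribution_lt_of_subsingleton (hC : IsShortestOddCycle G f)
    (hk : 7 ≤ k) (hw : ∀ b c, G.Adj w (f b) → G.Adj w (f c) → b = c) :
    contribution G k f w < k - 1 := by
  have h₁ : (#(memIndices G k f w 1) : ℝ) ≤ 1 := by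
    exact_mod_cast card_memIndices_one_le_of_subsingleton hk hw
  have h₂ : (#(memIndices G k f w 2) : ℝ) ≤ 3 := mod_cast hC.card_memIndices_two_le hk
  have hpath : ∑ n ∈ range (k - 5), (#(memIndices G k f w (n + 3 + 1)) : ℝ) ≤ k - 5 := by
    calc _ ≤ ∑ n ∈ range (k - 5), (1 : ℝ) := sum_le_sum fun n hn => by
          exact_mod_cast hC.card_memIndices_succ_le_of_subsingleton (by omega)
            (by have := mem_range.1 hn; omega) hw
      _ = k - 5 := by simp [Nat.cast_sub (show 5 ≤ k by omega)]
  rw [contribution_eq (by omega), memIndices_three_of_subsingleton hk hw,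
    hC.memIndices_sub_one_of_subsingleton hk hw, card_empty, Nat.cast_zero]
  linarith

lemma IsShortestOddCycle.contribution_le (hC : IsShortestOddCycle G f) (hk : 7 ≤ k) (w : V) :
    contribution G k f w ≤ k - 1 := by
  rcases hC.exists_nbrs_or_subsingleton hk w with ⟨a, ha⟩ | hw
  · exact (hC.contribution_of_nbrs hk ha).le
  · exact (hC.contribution_lt_of_subsingleton hk hw).le

lemma IsShortestOddCycle.contribution_eq_iff (hC : IsShortestOddCycle G f) (hk : 7 ≤ k) (w : V) :
    contribution G k f w = k - 1 ↔ ∃ a, ∀ i, G.Adj w (f i) ↔ i = a - 1 ∨ i = a + 1 := by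
  refine ⟨fun h => ?_, fun ⟨a, ha⟩ => hC.contribution_of_nbrs hk ha⟩
  rcases hC.exists_nbrs_or_subsingleton hk w with hnbrs | hw
  · exact hnbrs
  · exact absurd h (hC.contribution_lt_of_subsingleton hk hw).ne

end Counting

/-- For a fixed `k`-cycle `v_0 v_1 … v_{k-1}` with good sequences `D_j` and
`n_{i,j} = |A_i(D_j)|`, equality `∑_{j=0}^{k-1} (n_{1,j}/2 + ∑_{i=2}^{k-1} n_{i,j}) = n(k-1)`
holds iff every vertex of `G` is adjacent to exactly two vertices of the cycle, which are
at distance two along the cycle (i.e. its neighbours on the cycle are `v_{a-1}` and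
`v_{a+1}` for some `a`). -/
theorem sum_of_contributions_eq_iff {V : Type*} [Fintype V] (k : ℕ) (hodd : Odd k)
    (hk : 7 ≤ k) (G : SimpleGraph V) (hG : NoShortOddCycle G k)
    (f : ZMod k → V) (hf : IsCycleMap G f) :
    (∑ j ∈ Finset.range k,
        ((Nat.card ↥(Aset G k (goodRot f (j : ZMod k)) 1) : ℝ) / 2 +
          ∑ i ∈ Finset.Icc 2 (k - 1),
            (Nat.card ↥(Aset G k (goodRot f (j : ZMod k)) i) : ℝ)) =
        (Fintype.card V : ℝ) * ((k : ℝ) - 1)) ↔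
      ∀ w : V, ∃ a : ZMod k, ∀ i : ZMod k, G.Adj w (f i) ↔ (i = a - 1 ∨ i = a + 1) := by
  have hC : IsShortestOddCycle G f := ⟨hf, hodd, hG⟩
  have := hC.neZero
  rw [sum_natCard_Aset_eq_sum_contribution,
    show (Fintype.card V : ℝ) * (k - 1) = ∑ _w : V, ((k : ℝ) - 1) by simp [mul_sub],
    sum_eq_sum_iff_of_le fun w _ => hC.contribution_le hk w]
  simp only [mem_univ, true_implies, hC.contribution_eq_iff hk]
end
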